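/- Let a, b ∈ ℚ̄ with a ≠ 0. The following are equivalent: (i) there exists α ∈ ℚ̄ with h_{a,b}(α) = 0 (i.e., the minimum value of h_{a,b} is achieved and equals 0); (ii) b = 0, or b is a root of unity, or there exists a root of unity ζ such that aζ + b = 0 or aζ + b is a root of unity. Furthermore, if (i) holds and moreover b ≠ 0, b is not a root of unity, and |a| ≠ |b| (under a fixed embedding of ℚ̄ into ℂ), then | |a| − |b| | ≤ 1 and |a| + |b| ≥ 1. -/

import Mathlib

noncomputable section

/-- The field of algebraic numbers, `ℚ̄`. -/
abbrev Qbar : Type := AlgebraicClosure ℚ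

/-- `log⁺ x = max (log x) 0` (for `x ≥ 0`). -/
def logPlus (x : ℝ) : ℝ := Real.log (max 1 x)

/-- The absolute Weil height, via the Mahler-measure formula
`h(α) = (1/d) (log a_d + ∑_i log⁺ |α_i|)`, where `a_d` is the (positive) leading coefficient
of the primitive integer minimal polynomial of `α` and the `α_i` are the conjugates of `α`
in `ℂ`. -/
def weilHeight (α : Qbar) : ℝ :=
  ((minpoly ℚ α).natDegree : ℝ)⁻¹ *
    (Real.log (sInf {n : ℕ | 0 < n ∧ ∀ i, (((minpoly ℚ α).coeff i) * (n : ℚ)).den = 1} : ℕ) +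
     (((minpoly ℚ α).aroots ℂ).map (fun z => logPlus ‖z‖)).sum)

/-- The essential minimum of a real-valued function:
`μ^ess(f) = inf {θ : {α | f α ≤ θ} is infinite}`. -/
def essMin {X : Type} (f : X → ℝ) : ℝ :=
  sInf {θ : ℝ | {α : X | f α ≤ θ}.Infinite}

/-- The height `h_{a,b}(α) = h(α) + h(aα + b)`. -/
def hab (a b : Qbar) (α : Qbar) : ℝ := weilHeight α + weilHeight (a * α + b)

/-!
Both summands of `h_{a,b}(α) = h(α) + h(aα + b)` are nonnegative, so `h_{a,b}(α) = 0` forces both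
to vanish. A height vanishes exactly when the minimal polynomial has integer coefficients and all
conjugates lie in the closed unit disc, which by Kronecker's theorem means the number is `0` or a
root of unity; taking `α = 0` or `α = ζ` gives the equivalence. If `b` is neither `0` nor a root of
unity, the zero comes from a root of unity `ζ`, and `aζ + b = 0` would give `|a| = |b|`; so
`|aζ + b| = 1 = |ζ|` and the triangle inequality yields both bounds.
-/

open Polynomial

theorem Multiset.sum_map_eq_zero_iff_of_nonneg {ι α : Type*} [AddCommMonoid α] [PartialOrder α]
    [IsOrderedAddMonoid α] {s : Multiset ι} {f : ι → α} (hf : ∀ i ∈ s, 0 ≤ f i) :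
    (s.map f).sum = 0 ↔ ∀ i ∈ s, f i = 0 := by
  induction s using Multiset.induction_on with
  | empty => simp
  | cons a s ih =>
    simp only [Multiset.mem_cons, forall_eq_or_imp] at hf ⊢
    rw [Multiset.map_cons, Multiset.sum_cons,
      add_eq_zero_iff_of_nonneg hf.1 (Multiset.sum_nonneg (by simpa using hf.2)), ih hf.2]

theorem Real.log_natCast_eq_zero_iff {n : ℕ} (hn : n ≠ 0) : Real.log n = 0 ↔ n = 1 := by
  rw [Real.log_eq_zero]
  have : (n : ℝ) ≠ -1 := by linarith [(Nat.cast_nonneg n : (0 : ℝ) ≤ n)]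
  simp [hn, this]

theorem logPlus_nonneg (x : ℝ) : 0 ≤ logPlus x := Real.log_nonneg (le_max_left _ _)

theorem sum_map_logPlus_norm_nonneg (s : Multiset ℂ) : 0 ≤ (s.map fun z => logPlus ‖z‖).sum :=
  Multiset.sum_nonneg fun _ h => by
    obtain ⟨z, -, rfl⟩ := Multiset.mem_map.mp h
    exact logPlus_nonneg _

theorem logPlus_eq_zero_iff {x : ℝ} : logPlus x = 0 ↔ x ≤ 1 := by
  rw [← (logPlus_nonneg x).ge_iff_eq', logPlus, Real.log_nonpos_iff (by positivity), max_le_iff,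
    and_iff_right le_rfl]

theorem Rat.den_mul_natCast_eq_one {q : ℚ} {n : ℕ} (h : q.den ∣ n) : (q * n).den = 1 := by
  obtain ⟨c, rfl⟩ := h
  rw [Nat.cast_mul, ← mul_assoc, Rat.mul_den_eq_num]
  exact_mod_cast Rat.den_intCast (q.num * c)

def clearingDenom (p : ℚ[X]) : ℕ := sInf {n : ℕ | 0 < n ∧ ∀ i, ((p.coeff i) * (n : ℚ)).den = 1}

theorem clearingDenom_spec (p : ℚ[X]) :
    0 < clearingDenom p ∧ ∀ i, (p.coeff i * clearingDenom p).den = 1 := by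
  refine Nat.sInf_mem (s := {n : ℕ | 0 < n ∧ ∀ i, (p.coeff i * n).den = 1})
    ⟨∏ i ∈ p.support, (p.coeff i).den, Finset.prod_pos fun i _ => (p.coeff i).pos, fun i => ?_⟩
  by_cases hi : i ∈ p.support
  · exact Rat.den_mul_natCast_eq_one (Finset.dvd_prod_of_mem _ hi)
  · rw [notMem_support_iff.mp hi, zero_mul, Rat.den_zero]

theorem clearingDenom_eq_one_iff (p : ℚ[X]) : clearingDenom p = 1 ↔ ∀ i, (p.coeff i).den = 1 := by
  constructor
  · intro h i
    simpa [h] using (clearingDenom_spec p).2 i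
  · exact fun h => le_antisymm (Nat.sInf_le ⟨one_pos, by simpa using h⟩) (clearingDenom_spec p).1

theorem isIntegral_int_iff_den_coeff_minpoly_eq_one {L : Type*} [Field L] [Algebra ℚ L] {x : L}
    (hx : IsIntegral ℚ x) : IsIntegral ℤ x ↔ ∀ i, ((minpoly ℚ x).coeff i).den = 1 := by
  constructor
  · intro hxi i
    rw [minpoly.isIntegrallyClosed_eq_field_fractions' ℚ hxi, coeff_map]
    exact Rat.den_intCast _
  · intro h
    have hlift : minpoly ℚ x ∈ lifts (algebraMap ℤ ℚ) :=
      (lifts_iff_coeff_lifts _).mpr fun i => ⟨_, (Rat.den_eq_one_iff _).mp (h i)⟩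
    obtain ⟨q, hq, -, hqm⟩ := lifts_and_degree_eq_and_monic hlift (minpoly.monic hx)
    exact ⟨q, hqm, by rw [← aeval_def, ← aeval_map_algebraMap ℚ, hq, minpoly.aeval]⟩

open IntermediateField in
theorem exists_pow_eq_one_of_norm_aroots_minpoly_le_one {L : Type*} [Field L] [CharZero L]
    {x : L} (hx₀ : x ≠ 0) (hxi : IsIntegral ℤ x)
    (hx : ∀ z ∈ (minpoly ℚ x).aroots ℂ, ‖z‖ ≤ 1) : ∃ n, 0 < n ∧ x ^ n = 1 := by
  have hxℚ : IsIntegral ℚ x := hxi.tower_top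
  have : FiniteDimensional ℚ ℚ⟮x⟯ := adjoin.finiteDimensional hxℚ
  have : NumberField ℚ⟮x⟯ := ⟨⟩
  have hgen : algebraMap ℚ⟮x⟯ L (AdjoinSimple.gen ℚ x) = x := AdjoinSimple.algebraMap_gen ℚ x
  have hconj (φ : ℚ⟮x⟯ →+* ℂ) : φ (AdjoinSimple.gen ℚ x) ∈ (minpoly ℚ x).aroots ℂ := by
    refine mem_aroots.mpr ⟨minpoly.ne_zero hxℚ, ?_⟩
    rw [← minpoly_gen]
    refine (aeval_algHom_apply φ.toRatAlgHom _ _).trans ?_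
    -- `convert` reconciles the intermediate-field and the canonical `ℚ`-algebra on `ℚ⟮x⟯`
    convert map_zero φ.toRatAlgHom
    exact minpoly.aeval ℚ _
  obtain ⟨n, hn, hpow⟩ := NumberField.Embeddings.pow_eq_one_of_norm_le_one ℚ⟮x⟯ ℂ
    (x := AdjoinSimple.gen ℚ x) (fun h => hx₀ (by rw [← hgen, h, map_zero]))
    ((isIntegral_algebraMap_iff (algebraMap ℚ⟮x⟯ L).injective).mp (hgen ▸ hxi))
    fun φ => hx _ (hconj φ)
  exact ⟨n, hn, by rw [← hgen, ← map_pow, hpow, map_one]⟩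

theorem pow_eq_one_of_mem_aroots_minpoly {L : Type*} [Field L] [CharZero L] {x : L} {n : ℕ}
    (hx : x ^ n = 1) {z : ℂ} (hz : z ∈ (minpoly ℚ x).aroots ℂ) : z ^ n = 1 := by
  obtain ⟨q, hq⟩ := minpoly.dvd ℚ x (p := X ^ n - 1) (by simp [hx])
  have := congrArg (aeval z) hq
  rw [map_mul, (mem_aroots.mp hz).2, zero_mul, map_sub, map_pow, aeval_X, map_one] at this
  exact sub_eq_zero.mp this

theorem weilHeight_eq (α : Qbar) : weilHeight α = ((minpoly ℚ α).natDegree : ℝ)⁻¹ *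
    (Real.log (clearingDenom (minpoly ℚ α)) +
      (((minpoly ℚ α).aroots ℂ).map (fun z => logPlus ‖z‖)).sum) := rfl

theorem weilHeight_nonneg (x : Qbar) : 0 ≤ weilHeight x :=
  mul_nonneg (inv_nonneg.mpr (Nat.cast_nonneg _))
    (add_nonneg (Real.log_natCast_nonneg _) (sum_map_logPlus_norm_nonneg _))

theorem weilHeight_eq_zero_iff_isIntegral_and_norm_le_one (x : Qbar) :
    weilHeight x = 0 ↔ IsIntegral ℤ x ∧ ∀ z ∈ (minpoly ℚ x).aroots ℂ, ‖z‖ ≤ 1 := by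
  have hx : IsIntegral ℚ x := ((AlgebraicClosure.isAlgebraic ℚ).isAlgebraic x).isIntegral
  have hdeg : ((minpoly ℚ x).natDegree : ℝ)⁻¹ ≠ 0 := by
    have := minpoly.natDegree_pos hx
    positivity
  rw [weilHeight_eq, mul_eq_zero, or_iff_right hdeg,
    add_eq_zero_iff_of_nonneg (Real.log_natCast_nonneg _) (sum_map_logPlus_norm_nonneg _),
    Real.log_natCast_eq_zero_iff (clearingDenom_spec _).1.ne', clearingDenom_eq_one_iff,
    Multiset.sum_map_eq_zero_iff_of_nonneg fun _ _ => logPlus_nonneg _]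
  simp only [logPlus_eq_zero_iff]
  exact and_congr_left' (isIntegral_int_iff_den_coeff_minpoly_eq_one hx).symm

theorem weilHeight_eq_zero_iff (x : Qbar) : weilHeight x = 0 ↔ x = 0 ∨ ∃ n, 0 < n ∧ x ^ n = 1 := by
  rw [weilHeight_eq_zero_iff_isIntegral_and_norm_le_one]
  constructor
  · rintro ⟨hxi, hx⟩
    exact or_iff_not_imp_left.mpr fun hx₀ =>
      exists_pow_eq_one_of_norm_aroots_minpoly_le_one hx₀ hxi hx
  · rintro (rfl | ⟨n, hn, hxn⟩)
    · exact ⟨isIntegral_zero, by simp [minpoly.zero]⟩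
    · refine ⟨IsIntegral.of_pow hn (hxn ▸ isIntegral_one), fun z hz => ?_⟩
      exact (Complex.norm_eq_one_of_pow_eq_one (pow_eq_one_of_mem_aroots_minpoly hxn hz) hn.ne').le

theorem hab_eq_zero_iff (a b α : Qbar) :
    hab a b α = 0 ↔ weilHeight α = 0 ∧ weilHeight (a * α + b) = 0 :=
  add_eq_zero_iff_of_nonneg (weilHeight_nonneg _) (weilHeight_nonneg _)

theorem exists_hab_eq_zero_iff (a b : Qbar) :
    (∃ α, hab a b α = 0) ↔
      b = 0 ∨ (∃ n, 0 < n ∧ b ^ n = 1) ∨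
        ∃ ζ : Qbar, (∃ n, 0 < n ∧ ζ ^ n = 1) ∧
          (a * ζ + b = 0 ∨ ∃ m, 0 < m ∧ (a * ζ + b) ^ m = 1) := by
  simp only [hab_eq_zero_iff, weilHeight_eq_zero_iff]
  constructor
  · rintro ⟨α, rfl | hα, hαb⟩
    · rw [mul_zero, zero_add] at hαb
      exact hαb.imp_right Or.inl
    · exact Or.inr (Or.inr ⟨α, hα, hαb⟩)
  · rintro (rfl | hb | ⟨ζ, hζ, hζb⟩)
    · exact ⟨0, Or.inl rfl, Or.inl (by rw [mul_zero, zero_add])⟩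
    · exact ⟨0, Or.inl rfl, Or.inr (by rwa [mul_zero, zero_add])⟩
    · exact ⟨ζ, Or.inr hζ, hζb⟩

theorem RingHom.norm_map_eq_one_of_pow_eq_one {R : Type*} [Ring R] (j : R →+* ℂ) {x : R} {n : ℕ}
    (hx : x ^ n = 1) (hn : n ≠ 0) : ‖j x‖ = 1 :=
  Complex.norm_eq_one_of_pow_eq_one (by rw [← map_pow, hx, map_one]) hn

section NormedDivisionRing

variable {𝕜 : Type*} [NormedDivisionRing 𝕜] {u ζ w : 𝕜}

theorem norm_eq_norm_of_mul_add_eq_zero (hζ : ‖ζ‖ = 1) (h : u * ζ + w = 0) : ‖u‖ = ‖w‖ := by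
  rw [← norm_neg w, ← eq_neg_of_add_eq_zero_left h, norm_mul, hζ, mul_one]

theorem abs_norm_sub_norm_le_of_norm_mul_add_eq_one (hζ : ‖ζ‖ = 1) (h : ‖u * ζ + w‖ = 1) :
    |‖u‖ - ‖w‖| ≤ 1 := by
  have := abs_norm_sub_norm_le (u * ζ) (-w)
  rwa [sub_neg_eq_add, h, norm_mul, hζ, mul_one, norm_neg] at this

theorem one_le_norm_add_norm_of_norm_mul_add_eq_one (hζ : ‖ζ‖ = 1) (h : ‖u * ζ + w‖ = 1) :
    1 ≤ ‖u‖ + ‖w‖ := by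
  calc 1 = ‖u * ζ + w‖ := h.symm
    _ ≤ ‖u * ζ‖ + ‖w‖ := norm_add_le _ _
    _ = ‖u‖ + ‖w‖ := by rw [norm_mul, hζ, mul_one]

end NormedDivisionRing

theorem hab_min_zero_iff_general (a b : Qbar) (j : Qbar →+* ℂ) :
    ((∃ α : Qbar, hab a b α = 0) ↔
      (b = 0 ∨ (∃ n : ℕ, 0 < n ∧ b ^ n = 1) ∨
        ∃ ζ : Qbar, (∃ n : ℕ, 0 < n ∧ ζ ^ n = 1) ∧
          (a * ζ + b = 0 ∨ ∃ m : ℕ, 0 < m ∧ (a * ζ + b) ^ m = 1))) ∧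
    ((∃ α : Qbar, hab a b α = 0) → b ≠ 0 → (¬ ∃ n : ℕ, 0 < n ∧ b ^ n = 1) →
      ‖j a‖ ≠ ‖j b‖ →
      |‖j a‖ - ‖j b‖| ≤ 1 ∧
        1 ≤ ‖j a‖ + ‖j b‖) := by
  refine ⟨exists_hab_eq_zero_iff a b, fun hα hb₀ hb hnorm => ?_⟩
  obtain ⟨ζ, ⟨n, hn, hζn⟩, hζb⟩ :=
    (((exists_hab_eq_zero_iff a b).mp hα).resolve_left hb₀).resolve_left hb
  have hζ : ‖j ζ‖ = 1 := j.norm_map_eq_one_of_pow_eq_one hζn hn.ne'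
  rcases hζb with hzero | ⟨m, hm, hunit⟩
  · refine absurd (norm_eq_norm_of_mul_add_eq_zero hζ ?_) hnorm
    rw [← map_mul, ← map_add, hzero, map_zero]
  · have hsum : ‖j a * j ζ + j b‖ = 1 := by
      rw [← map_mul, ← map_add]
      exact j.norm_map_eq_one_of_pow_eq_one hunit hm.ne'
    exact ⟨abs_norm_sub_norm_le_of_norm_mul_add_eq_one hζ hsum,
      one_le_norm_add_norm_of_norm_mul_add_eq_one hζ hsum⟩

/-- The minimum value of `h_{a,b}` is achieved and equals `0` iff `b = 0`, or `b` is a root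
of unity, or there is a root of unity `ζ` with `aζ + b = 0` or `aζ + b` a root of unity.
Furthermore, if this holds, `b ≠ 0`, `b` is not a root of unity and `|a| ≠ |b|` (via a fixed
embedding `j : ℚ̄ → ℂ`), then `||a| - |b|| ≤ 1` and `|a| + |b| ≥ 1`. -/
theorem hab_min_zero_iff (a b : Qbar) (ha : a ≠ 0) (j : Qbar →+* ℂ) :
    ((∃ α : Qbar, hab a b α = 0) ↔
      (b = 0 ∨ (∃ n : ℕ, 0 < n ∧ b ^ n = 1) ∨
        ∃ ζ : Qbar, (∃ n : ℕ, 0 < n ∧ ζ ^ n = 1) ∧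
          (a * ζ + b = 0 ∨ ∃ m : ℕ, 0 < m ∧ (a * ζ + b) ^ m = 1))) ∧
    ((∃ α : Qbar, hab a b α = 0) → b ≠ 0 → (¬ ∃ n : ℕ, 0 < n ∧ b ^ n = 1) →
      ‖j a‖ ≠ ‖j b‖ →
      |‖j a‖ - ‖j b‖| ≤ 1 ∧
        1 ≤ ‖j a‖ + ‖j b‖) :=
  hab_min_zero_iff_general a b j

end
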